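/- Let μ and ν be finite measures on a measurable space X, and let f_1, …, f_N : X → ℂ be bounded measurable functions that are orthonormal in L²(μ), i.e. ∫_X f_i · conj(f_j) dμ = δ_{ij}. For t ∈ [0,1] let μ_t = (1-t)μ + tν and let G(μ_t) be the Gram matrix of the f_i with respect to μ_t. Then the function t ↦ log det G(μ_t) has right derivative at t = 0 equal to ∫_X (∑_{i=1}^N |f_i(x)|²) dν(x) − N. -/

import Mathlib

/-!
Integration against a measure is linear in the measure, so with `G(μ) = 1` the Gram matrix
along the segment is `G(μ_t) = 1 + t • (G(ν) - 1)` for `t ∈ [0, 1]`. Since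
`det (1 + t • M) = 1 + t · tr M + O(t²)`, the derivative of `log det G(μ_t)` at `0` is
`tr (G(ν) - 1) = ∫ ρ dν - N`.
-/

open MeasureTheory

noncomputable def gramMatrix {X ι : Type*} [MeasurableSpace X] (f : ι → X → ℂ) (σ : Measure X) :
    Matrix ι ι ℂ :=
  Matrix.of fun i j => ∫ x, f i x * (starRingEnd ℂ) (f j x) ∂σ

section Gram

variable {X ι : Type*} [MeasurableSpace X] {f : ι → X → ℂ}

theorem gramMatrix_ofReal_smul_add_ofReal_smul {μ ν : Measure X}
    (hμ : ∀ i j, Integrable (fun x => f i x * (starRingEnd ℂ) (f j x)) μ)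
    (hν : ∀ i j, Integrable (fun x => f i x * (starRingEnd ℂ) (f j x)) ν)
    {a b : ℝ} (ha : 0 ≤ a) (hb : 0 ≤ b) :
    gramMatrix f (ENNReal.ofReal a • μ + ENNReal.ofReal b • ν)
      = (a : ℂ) • gramMatrix f μ + (b : ℂ) • gramMatrix f ν := by
  ext i j
  rw [gramMatrix, Matrix.of_apply,
    integral_add_measure ((hμ i j).smul_measure ENNReal.ofReal_ne_top)
      ((hν i j).smul_measure ENNReal.ofReal_ne_top),
    integral_smul_measure, integral_smul_measure, ENNReal.toReal_ofReal ha,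
    ENNReal.toReal_ofReal hb]
  simp [gramMatrix, Complex.real_smul]

theorem trace_gramMatrix [Fintype ι] {σ : Measure X}
    (hf : ∀ i, Integrable (fun x => ‖f i x‖ ^ 2) σ) :
    (gramMatrix f σ).trace = ((∫ x, ∑ i, ‖f i x‖ ^ 2 ∂σ : ℝ) : ℂ) := by
  have hdiag : ∀ i, gramMatrix f σ i i = ((∫ x, ‖f i x‖ ^ 2 ∂σ : ℝ) : ℂ) := fun i => by
    simp only [gramMatrix, Matrix.of_apply, Complex.mul_conj, ← Complex.sq_norm]
    exact integral_ofReal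
  simp only [Matrix.trace, Matrix.diag_apply, hdiag, integral_finsetSum _ fun i _ => hf i,
    Complex.ofReal_sum]

end Gram

theorem Matrix.hasDerivAt_det_one_add_smul {ι 𝕜 : Type*} [Fintype ι] [DecidableEq ι]
    [NontriviallyNormedField 𝕜] (M : Matrix ι ι 𝕜) :
    HasDerivAt (fun z : 𝕜 => (1 + z • M).det) M.trace 0 := by
  have hpoly : (fun z : 𝕜 => (1 + z • M).det)
      = fun z => ((1 + (Polynomial.X : Polynomial 𝕜) • M.map Polynomial.C).det).eval z := by
    funext z
    rw [← Polynomial.coe_evalRingHom, RingHom.map_det]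
    congr 1
    ext i j
    by_cases h : i = j <;> simp [h]
    all_goals ring
  rw [hpoly, ← Matrix.derivative_det_one_add_X_smul]
  exact Polynomial.hasDerivAt _ 0

theorem Matrix.hasDerivAt_log_re_det_one_add_smul {ι : Type*} [Fintype ι] [DecidableEq ι]
    (M : Matrix ι ι ℂ) :
    HasDerivAt (fun t : ℝ => Real.log ((1 + (t : ℂ) • M).det).re) M.trace.re 0 := by
  have hdet := HasDerivAt.real_of_complex (z := 0) (by simpa using M.hasDerivAt_det_one_add_smul)
  simpa using hdet.log (by simp)

theorem integrable_mul_conj_of_bounded {X : Type*} [MeasurableSpace X] {σ : Measure X}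
    [IsFiniteMeasure σ] {g h : X → ℂ} (hg : Measurable g) (hh : Measurable h)
    {Cg Ch : ℝ} (hgC : ∀ x, ‖g x‖ ≤ Cg) (hhC : ∀ x, ‖h x‖ ≤ Ch) :
    Integrable (fun x => g x * (starRingEnd ℂ) (h x)) σ :=
  .of_bound (hg.mul (Complex.continuous_conj.measurable.comp hh)).aestronglyMeasurable (Cg * Ch)
    (ae_of_all _ fun x => by
      rw [norm_mul, Complex.norm_conj]
      exact mul_le_mul (hgC x) (hhC x) (norm_nonneg _) ((norm_nonneg _).trans (hgC x)))

theorem stmt_10_general {X : Type*} [MeasurableSpace X]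
    (μ ν : Measure X) [IsFiniteMeasure μ] [IsFiniteMeasure ν]
    (N : ℕ) (f : Fin N → X → ℂ)
    (hmeas : ∀ i, Measurable (f i)) (hfb : ∀ i, ∃ C, ∀ x, ‖f i x‖ ≤ C)
    (horth : ∀ i j, ∫ x, f i x * (starRingEnd ℂ) (f j x) ∂μ = if i = j then 1 else 0) :
    HasDerivWithinAt (fun t : ℝ => Real.log ((Matrix.of fun i j =>
        ∫ x, f i x * (starRingEnd ℂ) (f j x)
          ∂(ENNReal.ofReal (1 - t) • μ + ENNReal.ofReal t • ν)).det).re)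
      ((∫ x, (∑ i, ‖f i x‖ ^ 2) ∂ν) - N) (Set.Ici 0) 0 := by
  choose C hC using hfb
  have hint (σ : Measure X) [IsFiniteMeasure σ] (i j : Fin N) :
      Integrable (fun x => f i x * (starRingEnd ℂ) (f j x)) σ :=
    integrable_mul_conj_of_bounded (hmeas i) (hmeas j) (hC i) (hC j)
  have hgram_μ : gramMatrix f μ = 1 := by
    ext i j
    simp [gramMatrix, horth, Matrix.one_apply]
  have hsegment : ∀ t ∈ Set.Icc (0 : ℝ) 1,
      Real.log (gramMatrix f (ENNReal.ofReal (1 - t) • μ + ENNReal.ofReal t • ν)).det.re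
        = Real.log (1 + (t : ℂ) • (gramMatrix f ν - 1)).det.re := fun t ht => by
    rw [gramMatrix_ofReal_smul_add_ofReal_smul (hint μ) (hint ν) (sub_nonneg.2 ht.2) ht.1,
      hgram_μ]
    congr 3
    push_cast
    module
  have htrace : (gramMatrix f ν - 1).trace.re = (∫ x, (∑ i, ‖f i x‖ ^ 2) ∂ν) - N := by
    rw [Matrix.trace_sub, Matrix.trace_one, trace_gramMatrix]
    · simp
    · intro i
      simpa [Complex.mul_conj, ← Complex.sq_norm] using (hint ν i i).norm
  rw [← htrace]
  refine (gramMatrix f ν - 1).hasDerivAt_log_re_det_one_add_smul.hasDerivWithinAt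
    |>.congr_of_eventuallyEq ?_ (hsegment 0 ⟨le_rfl, zero_le_one⟩)
  filter_upwards [self_mem_nhdsWithin, nhdsWithin_le_nhds (Iio_mem_nhds zero_lt_one)]
    with t ht0 ht1 using hsegment t ⟨ht0, ht1.le⟩

/-- The right derivative at `t = 0` of `t ↦ log det G(μ_t)` along the segment of
measures `μ_t = (1-t)μ + tν`, for a family orthonormal in `L²(μ)`, equals
`∫ ρ dν − N` where `ρ = ∑ |f i|²` is the Bergman distortion function of `μ`. -/
theorem stmt_10 {X : Type*} [MeasurableSpace X]
    (μ ν : Measure X) [IsFiniteMeasure μ] [IsFiniteMeasure ν]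
    (N : ℕ) (hN : 1 ≤ N) (f : Fin N → X → ℂ)
    (hmeas : ∀ i, Measurable (f i)) (hfb : ∀ i, ∃ C, ∀ x, ‖f i x‖ ≤ C)
    (horth : ∀ i j, ∫ x, f i x * (starRingEnd ℂ) (f j x) ∂μ = if i = j then 1 else 0) :
    HasDerivWithinAt (fun t : ℝ => Real.log ((Matrix.of fun i j =>
        ∫ x, f i x * (starRingEnd ℂ) (f j x)
          ∂(ENNReal.ofReal (1 - t) • μ + ENNReal.ofReal t • ν)).det).re)
      ((∫ x, (∑ i, ‖f i x‖ ^ 2) ∂ν) - N) (Set.Ici 0) 0 :=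
  stmt_10_general μ ν N f hmeas hfb horth
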